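/- Let p, q be natural numbers, let F : ℝᵖ × ℝ^q → ℝ be twice continuously differentiable and g : ℝᵖ → ℝ^q continuously differentiable, and suppose the identity ∇_u F(α, g(α)) = 0 holds for all α ∈ ℝᵖ, where ∇_u F denotes the partial gradient in the second argument. Fix α ∈ ℝᵖ and write the Hessian of F at (α, g(α)) in block form with blocks H_{αα} (p × p), H_{αu} (p × q), H_{uα} = H_{αu}ᵀ (q × p) and H_{uu} (q × q), and assume H_{uu} is invertible. Then the reduced objective F̄(α) = F(α, g(α)) is twice differentiable at α, the derivative of g satisfies Dg(α) = −H_{uu}^{-1} H_{uα}, and the Hessian of F̄ at α equals H_{αα} − H_{αu} H_{uu}^{-1} H_{uα}. -/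

import Mathlib

/-!
Along the graph of `g` the partial derivative of `F` in `u` vanishes identically, so the chain
rule gives `DF̄(a) = ∂_α F(a, g a)` (envelope theorem); differentiating once more,
`D²F̄(α)(v, w) = B((v, Dg v), (w, 0))` with `B` the Hessian of `F`. Differentiating the
stationarity identity itself gives `B((v, Dg v), (0, w)) = 0`, i.e. `Huu Dg = -Huα`. By the
symmetry of `B` the cross terms then collapse to `D²F̄(α) = Hαα + Hαu Dg`, the Schur complement.
-/

open Matrix ContinuousLinearMap

theorem Prod.mk_eq_mk_zero_add_zero_mk {M N : Type*} [AddZeroClass M] [AddZeroClass N] (x : M)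
    (y : N) : (x, y) = (x, 0) + (0, y) := by
  simp

section Reduction

variable {𝕜 E U G : Type*} [NontriviallyNormedField 𝕜]
  [NormedAddCommGroup E] [NormedSpace 𝕜 E] [NormedAddCommGroup U] [NormedSpace 𝕜 U]
  [NormedAddCommGroup G] [NormedSpace 𝕜 G] {F : E × U → G} {g : E → U}

theorem fderiv_partial_eq_fderiv_comp_inr {a : E} {u : U} (hF : DifferentiableAt 𝕜 F (a, u)) :
    fderiv 𝕜 (fun u => F (a, u)) u = (fderiv 𝕜 F (a, u)).comp (inr 𝕜 E U) :=
  (hF.hasFDerivAt.comp u (hasFDerivAt_prodMk_right a u)).fderiv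

theorem fderiv_apply_zero_prod_eq_zero {a : E} (hF : DifferentiableAt 𝕜 F (a, g a))
    (hstat : fderiv 𝕜 (fun u => F (a, u)) (g a) = 0) (w : U) :
    fderiv 𝕜 F (a, g a) (0, w) = 0 := by
  have h := fderiv_partial_eq_fderiv_comp_inr hF
  rw [hstat] at h
  simpa using congr($h w).symm

/-- Envelope theorem. -/
theorem hasFDerivAt_reduced {a : E} (hF : DifferentiableAt 𝕜 F (a, g a))
    (hg : DifferentiableAt 𝕜 g a) (hstat : fderiv 𝕜 (fun u => F (a, u)) (g a) = 0) :
    HasFDerivAt (fun a => F (a, g a)) ((fderiv 𝕜 F (a, g a)).comp (inl 𝕜 E U)) a := by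
  refine (hF.hasFDerivAt.comp a ((hasFDerivAt_id a).prodMk hg.hasFDerivAt)).congr_fderiv ?_
  ext v
  simp only [coe_comp, Function.comp_apply, inl_apply, prod_apply, coe_id', id_eq]
  rw [Prod.mk_eq_mk_zero_add_zero_mk v, map_add, fderiv_apply_zero_prod_eq_zero hF hstat,
    add_zero]

theorem fderiv_reduced (hF : Differentiable 𝕜 F) (hg : Differentiable 𝕜 g)
    (hstat : ∀ a, fderiv 𝕜 (fun u => F (a, u)) (g a) = 0) :
    fderiv 𝕜 (fun a => F (a, g a)) = fun a => (fderiv 𝕜 F (a, g a)).comp (inl 𝕜 E U) :=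
  funext fun a => (hasFDerivAt_reduced (hF _) (hg a) (hstat a)).fderiv

theorem hasFDerivAt_fderiv_comp_graph {α : E} (hg : DifferentiableAt 𝕜 g α)
    (hF' : DifferentiableAt 𝕜 (fderiv 𝕜 F) (α, g α)) :
    HasFDerivAt (fun a => fderiv 𝕜 F (a, g a))
      ((fderiv 𝕜 (fderiv 𝕜 F) (α, g α)).comp
        ((ContinuousLinearMap.id 𝕜 E).prod (fderiv 𝕜 g α))) α :=
  hF'.hasFDerivAt.comp α ((hasFDerivAt_id α).prodMk hg.hasFDerivAt)

theorem hasFDerivAt_fderiv_reduced (hF : Differentiable 𝕜 F) (hg : Differentiable 𝕜 g)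
    (hstat : ∀ a, fderiv 𝕜 (fun u => F (a, u)) (g a) = 0) {α : E}
    (hF' : DifferentiableAt 𝕜 (fderiv 𝕜 F) (α, g α)) :
    HasFDerivAt (fderiv 𝕜 fun a => F (a, g a))
      (((compL 𝕜 E (E × U) G).flip (inl 𝕜 E U)).comp
        ((fderiv 𝕜 (fderiv 𝕜 F) (α, g α)).comp
          ((ContinuousLinearMap.id 𝕜 E).prod (fderiv 𝕜 g α)))) α := by
  rw [fderiv_reduced hF hg hstat]
  exact ((compL 𝕜 E (E × U) G).flip (inl 𝕜 E U)).hasFDerivAt.comp α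
    (hasFDerivAt_fderiv_comp_graph (hg α) hF')

theorem fderiv_fderiv_reduced_apply (hF : Differentiable 𝕜 F) (hg : Differentiable 𝕜 g)
    (hstat : ∀ a, fderiv 𝕜 (fun u => F (a, u)) (g a) = 0) {α : E}
    (hF' : DifferentiableAt 𝕜 (fderiv 𝕜 F) (α, g α)) (v w : E) :
    fderiv 𝕜 (fderiv 𝕜 fun a => F (a, g a)) α v w =
      fderiv 𝕜 (fderiv 𝕜 F) (α, g α) (v, fderiv 𝕜 g α v) (w, 0) := by
  rw [(hasFDerivAt_fderiv_reduced hF hg hstat hF').fderiv]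
  rfl

/-- Differentiating the stationarity identity along the graph of `g`. -/
theorem fderiv_fderiv_apply_graph_zero_prod (hF : Differentiable 𝕜 F)
    (hstat : ∀ a, fderiv 𝕜 (fun u => F (a, u)) (g a) = 0) {α : E} (hg : DifferentiableAt 𝕜 g α)
    (hF' : DifferentiableAt 𝕜 (fderiv 𝕜 F) (α, g α)) (v : E) (w : U) :
    fderiv 𝕜 (fderiv 𝕜 F) (α, g α) (v, fderiv 𝕜 g α v) (0, w) = 0 := by
  have h := (apply 𝕜 G ((0 : E), w)).hasFDerivAt.comp α (hasFDerivAt_fderiv_comp_graph hg hF')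
  have hzero : (fun a => apply 𝕜 G ((0 : E), w) (fderiv 𝕜 F (a, g a))) = fun _ => 0 :=
    funext fun a => fderiv_apply_zero_prod_eq_zero (hF _) (hstat a) w
  rw [Function.comp_def, hzero] at h
  exact congr($(h.unique (hasFDerivAt_const 0 α)) v)

end Reduction

section SchurComplement

variable {𝕜 E U G : Type*} [NontriviallyNormedField 𝕜]
  [NormedAddCommGroup E] [NormedSpace 𝕜 E] [NormedAddCommGroup U] [NormedSpace 𝕜 U]
  [NormedAddCommGroup G] [NormedSpace 𝕜 G]
  {B : E × U →L[𝕜] E × U →L[𝕜] G} {D : E →L[𝕜] U}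

theorem apply_zero_prod_eq_neg (hcrit : ∀ v w, B (v, D v) (0, w) = 0) (v : E) (w : U) :
    B (0, D v) (0, w) = -B (v, 0) (0, w) := by
  have h := hcrit v w
  rw [Prod.mk_eq_mk_zero_add_zero_mk v, map_add, _root_.add_apply] at h
  exact eq_neg_of_add_eq_zero_right h

theorem apply_graph_prod_zero (hB : ∀ x y, B x y = B y x) (hcrit : ∀ v w, B (v, D v) (0, w) = 0)
    (v w : E) : B (v, D v) (w, 0) = B (v, 0) (w, 0) + B (v, 0) (0, D w) := by
  calc B (v, D v) (w, 0) = B (v, D v) (w, D w) := by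
        rw [Prod.mk_eq_mk_zero_add_zero_mk w (D w), map_add, hcrit, add_zero]
    _ = B (w, D w) (v, 0) := by
        rw [hB, Prod.mk_eq_mk_zero_add_zero_mk v (D v), map_add, hcrit, add_zero]
    _ = B (v, 0) (w, 0) + B (v, 0) (0, D w) := by
        rw [hB, Prod.mk_eq_mk_zero_add_zero_mk w (D w), map_add]

end SchurComplement

section Coordinates

variable {𝕜 E : Type*} [NontriviallyNormedField 𝕜] [NormedAddCommGroup E] [NormedSpace 𝕜 E]
  {ι κ : Type*} [Fintype ι] [Fintype κ] [DecidableEq ι] [DecidableEq κ]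

theorem ContinuousLinearMap.apply_zero_prod_eq_sum (φ : E × (κ → 𝕜) →L[𝕜] 𝕜) (u : κ → 𝕜) :
    φ (0, u) = ∑ k, φ (0, Pi.single k 1) * u k := by
  change φ (inr 𝕜 E (κ → 𝕜) u) = _
  conv_lhs => rw [pi_eq_sum_univ' u, map_sum, map_sum]
  simp only [map_smul, smul_eq_mul, inr_apply, mul_comm]

variable {B : (ι → 𝕜) × (κ → 𝕜) →L[𝕜] (ι → 𝕜) × (κ → 𝕜) →L[𝕜] 𝕜} {D : (ι → 𝕜) →L[𝕜] κ → 𝕜}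
  {Hαα : Matrix ι ι 𝕜} {Hαu : Matrix ι κ 𝕜} {Huu : Matrix κ κ 𝕜}

theorem toMatrix'_eq_neg_inv_mul_transpose (hB : ∀ x y, B x y = B y x)
    (hcrit : ∀ v w, B (v, D v) (0, w) = 0)
    (hHαu : ∀ i j, Hαu i j = B (Pi.single i 1, 0) (0, Pi.single j 1))
    (hHuu : ∀ i j, Huu i j = B (0, Pi.single i 1) (0, Pi.single j 1)) (hinv : IsUnit Huu) :
    LinearMap.toMatrix' (D : (ι → 𝕜) →ₗ[𝕜] κ → 𝕜) = -(Huu⁻¹ * Hαuᵀ) := by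
  set Dm := LinearMap.toMatrix' (D : (ι → 𝕜) →ₗ[𝕜] κ → 𝕜)
  have hsys : Huu * Dm = -Hαuᵀ := by
    ext i j
    calc (Huu * Dm) i j = B (0, Pi.single i 1) (0, D (Pi.single j 1)) := by
          rw [apply_zero_prod_eq_sum, Matrix.mul_apply]
          simp [Dm, hHuu]
      _ = (-Hαuᵀ) i j := by
          rw [hB, apply_zero_prod_eq_neg hcrit, Matrix.neg_apply, transpose_apply, hHαu]
  calc Dm = Huu⁻¹ * (Huu * Dm) :=
        (nonsing_inv_mul_cancel_left Huu Dm ((isUnit_iff_isUnit_det Huu).mp hinv)).symm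
    _ = -(Huu⁻¹ * Hαuᵀ) := by rw [hsys, Matrix.mul_neg]

theorem apply_single_graph_single_prod_zero (hB : ∀ x y, B x y = B y x)
    (hcrit : ∀ v w, B (v, D v) (0, w) = 0)
    (hHαα : ∀ i j, Hαα i j = B (Pi.single i 1, 0) (Pi.single j 1, 0))
    (hHαu : ∀ i j, Hαu i j = B (Pi.single i 1, 0) (0, Pi.single j 1)) (i j : ι) :
    B (Pi.single i 1, D (Pi.single i 1)) (Pi.single j 1, 0) =
      (Hαα + Hαu * LinearMap.toMatrix' (D : (ι → 𝕜) →ₗ[𝕜] κ → 𝕜)) i j := by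
  rw [apply_graph_prod_zero hB hcrit, apply_zero_prod_eq_sum]
  simp [Matrix.mul_apply, hHαα, hHαu]

end Coordinates

/-- **Reduced-Hessian (Schur complement) formula, equation (12).**
Let `F : ℝᵖ × ℝ^q → ℝ` be `C²`, `g : ℝᵖ → ℝ^q` be `C¹`, and suppose the stationarity
identity `∇_u F(α, g(α)) = 0` holds for all `α`. Fix `α`, and let `Hαα`, `Hαu`, `Huu`
be the blocks of the Hessian of `F` at `(α, g(α))` (with `Huα = Hαuᵀ`), `Huu`
invertible. Then the reduced objective `F̄(a) = F(a, g(a))` is twice differentiable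
at `α`, `Dg(α) = −Huu⁻¹ Huα`, and the Hessian of `F̄` at `α` is
`Hαα − Hαu Huu⁻¹ Huα`. -/
theorem reduced_hessian_schur (p q : ℕ)
    (F : (Fin p → ℝ) × (Fin q → ℝ) → ℝ) (g : (Fin p → ℝ) → (Fin q → ℝ))
    (hF : ContDiff ℝ 2 F) (hg : ContDiff ℝ 1 g)
    (hstat : ∀ a, fderiv ℝ (fun u => F (a, u)) (g a) = 0)
    (α : Fin p → ℝ)
    (Hαα : Matrix (Fin p) (Fin p) ℝ) (Hαu : Matrix (Fin p) (Fin q) ℝ)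
    (Huu : Matrix (Fin q) (Fin q) ℝ)
    (hHαα : ∀ i j, Hαα i j =
      fderiv ℝ (fderiv ℝ F) (α, g α) (Pi.single i 1, 0) (Pi.single j 1, 0))
    (hHαu : ∀ i j, Hαu i j =
      fderiv ℝ (fderiv ℝ F) (α, g α) (Pi.single i 1, 0) (0, Pi.single j 1))
    (hHuu : ∀ i j, Huu i j =
      fderiv ℝ (fderiv ℝ F) (α, g α) (0, Pi.single i 1) (0, Pi.single j 1))
    (hinv : IsUnit Huu) :
    DifferentiableAt ℝ (fun a => F (a, g a)) α ∧
    DifferentiableAt ℝ (fderiv ℝ (fun a => F (a, g a))) α ∧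
    (∀ i j, fderiv ℝ g α (Pi.single j 1) i = (-(Huu⁻¹ * Hαuᵀ)) i j) ∧
    (∀ i j, fderiv ℝ (fderiv ℝ (fun a => F (a, g a))) α (Pi.single i 1) (Pi.single j 1) =
      (Hαα - Hαu * Huu⁻¹ * Hαuᵀ) i j) := by
  have hFd : Differentiable ℝ F := hF.differentiable two_ne_zero
  have hgd : Differentiable ℝ g := hg.differentiable one_ne_zero
  have hF' : DifferentiableAt ℝ (fderiv ℝ F) (α, g α) :=
    (hF.fderiv_right le_rfl).differentiable one_ne_zero _
  have hB : IsSymmSndFDerivAt ℝ F (α, g α) := hF.contDiffAt.isSymmSndFDerivAt (by simp)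
  have hcrit := fderiv_fderiv_apply_graph_zero_prod hFd hstat (hgd α) hF'
  have hD := toMatrix'_eq_neg_inv_mul_transpose hB hcrit hHαu hHuu hinv
  refine ⟨(hasFDerivAt_reduced (hFd _) (hgd α) (hstat α)).differentiableAt,
    (hasFDerivAt_fderiv_reduced hFd hgd hstat hF').differentiableAt, fun i j => ?_, fun i j => ?_⟩
  · rw [← hD]
    rfl
  · rw [fderiv_fderiv_reduced_apply hFd hgd hstat hF',
      apply_single_graph_single_prod_zero hB hcrit hHαα hHαu, hD, Matrix.mul_neg,
      ← sub_eq_add_neg, Matrix.mul_assoc]
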